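/- arXiv:2402.03965 — 2 statements merged into one kernel-verified Lean document; each statement's English description precedes it below -/
import Mathlib

section
/- For a nonzero polynomial g of degree less than n, d*(g) = n − deg(m_g) if and only if there exists h ∈ {0,...,n−1} such that (x^h·g mod x^n−1) divides x^n−1 (equivalently, x^h·g mod x^n−1 and m_g are associated polynomials). -/
open Polynomial

noncomputable def dftP {L : Type*} [Field L] (n : ℕ) (α : L) (f : L[X]) : L[X] :=
  ∑ j ∈ Finset.range n, C (f.eval (α ^ j)) * X ^ j

noncomputable def idftP {L : Type*} [Field L] (n : ℕ) (α : L) (g : L[X]) : L[X] :=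
  C ((n : L)⁻¹) * ∑ i ∈ Finset.range n, C (g.eval (α⁻¹ ^ i)) * X ^ i

open Classical in
noncomputable def appDist {L : Type*} [Field L] (n : ℕ) (g : L[X]) : ℕ :=
  if g = 0 then 0
  else (Finset.range n).sup fun h => n - ((X ^ h * g) %ₘ (X ^ n - 1)).natDegree

structure CyclicCode (L : Type*) [Field L] (q n : ℕ) where
  carrier : Set (Polynomial L)
  zero_mem : 0 ∈ carrier
  deg_lt : ∀ f ∈ carrier, Polynomial.natDegree f < n
  coeff_mem : ∀ f ∈ carrier, ∀ i, (Polynomial.coeff f i) ^ q = Polynomial.coeff f i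
  add_mem : ∀ f ∈ carrier, ∀ g ∈ carrier, f + g ∈ carrier
  smul_mem : ∀ a : L, a ^ q = a → ∀ f ∈ carrier, Polynomial.C a * f ∈ carrier
  shift_mem : ∀ f ∈ carrier, (Polynomial.X * f) %ₘ (Polynomial.X ^ n - 1) ∈ carrier

noncomputable def minDist {L : Type*} [Field L] {q n : ℕ} (C : CyclicCode L q n) : ℕ :=
  sInf { w | ∃ c ∈ C.carrier, c ≠ 0 ∧ w = c.support.card }

open Classical in
noncomputable def appDistAt {L : Type*} [Field L] {q n : ℕ} (α : L) (C : CyclicCode L q n) : ℕ :=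
  sInf { d | ∃ c ∈ C.carrier, c ≠ 0 ∧ d = appDist n (dftP n α c) }

open Classical in
noncomputable def appDistCode {L : Type*} [Field L] {q n : ℕ} (C : CyclicCode L q n) : ℕ :=
  sSup { d | ∃ α : L, IsPrimitiveRoot α n ∧ d = appDistAt α C }

def IsOptimalRoot {L : Type*} [Field L] {q n : ℕ} (α : L) (C : CyclicCode L q n) : Prop :=
  IsPrimitiveRoot α n ∧ appDistAt α C = appDistCode C

def IsGenBy {L : Type*} [Field L] {q n : ℕ} (v : Polynomial L) (C : CyclicCode L q n) : Prop :=
  v ∈ C.carrier ∧ ∀ C' : CyclicCode L q n, v ∈ C'.carrier → C.carrier ⊆ C'.carrier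

def IsIdemGen {L : Type*} [Field L] {q n : ℕ} (e : Polynomial L) (C : CyclicCode L q n) : Prop :=
  e ∈ C.carrier ∧ (e * e) %ₘ (X ^ n - 1) = e ∧ ∀ c ∈ C.carrier, (e * c) %ₘ (X ^ n - 1) = c

def IsGenPoly {L : Type*} [Field L] {q n : ℕ} (g : Polynomial L) (C : CyclicCode L q n) : Prop :=
  g ∈ C.carrier ∧ g.Monic ∧ g ∣ (X ^ n - 1) ∧ (∀ c ∈ C.carrier, g ∣ c) ∧
    ∀ f : L[X], f.natDegree < n → (∀ i, f.coeff i ^ q = f.coeff i) → g ∣ f → f ∈ C.carrier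

noncomputable def polyGcd {L : Type*} [Field L] (a b : L[X]) : L[X] :=
  letI := Classical.decEq L[X]
  EuclideanDomain.gcd a b


/-! A shift `r = x^h g mod P` lies in the ideal `(g, P) = (m_g)`, so `m_g ∣ r` and `deg m_g ≤ deg r`:
every term of the supremum defining `d*(g)` is at most `n - deg m_g`. Equality holds for a shift
exactly when `r` is associated to `m_g`, and since `r ≡ x^h g (mod P)` with `x` a unit modulo `P`,
this happens exactly when `r ∣ P`. -/

lemma Polynomial.dvd_modByMonic_iff_of_dvd {R : Type*} [CommRing R] {d p q : R[X]} (hd : d ∣ q) :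
    d ∣ p %ₘ q ↔ d ∣ p :=
  dvd_iff_dvd_of_dvd_sub (hd.trans (dvd_modByMonic_sub p q))

lemma Polynomial.associated_iff_natDegree_eq_of_dvd {K : Type*} [Field K] {p q : K[X]}
    (hqp : q ∣ p) (hp : p ≠ 0) : Associated p q ↔ p.natDegree = q.natDegree :=
  ⟨fun h => natDegree_eq_of_degree_eq (degree_eq_degree_of_associated h),
    fun h => (associated_of_dvd_of_natDegree_le hqp hp h.le).symm⟩

lemma Polynomial.isCoprime_X_X_pow_sub_one {R : Type*} [CommRing R] {n : ℕ} (hn : 0 < n) :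
    IsCoprime (X : R[X]) (X ^ n - 1) :=
  ⟨X ^ (n - 1), -1, by rw [← pow_succ, Nat.sub_add_cancel hn]; ring⟩

lemma Finset.sup_eq_iff_exists_eq_of_forall_le {ι α : Type*} [LinearOrder α] [OrderBot α]
    {s : Finset ι} (hs : s.Nonempty) {f : ι → α} {a : α} (hf : ∀ i ∈ s, f i ≤ a) :
    s.sup f = a ↔ ∃ i ∈ s, f i = a := by
  constructor
  · rintro rfl
    obtain ⟨i, hi, h⟩ := s.exists_mem_eq_sup hs f
    exact ⟨i, hi, h.symm⟩
  · rintro ⟨i, hi, rfl⟩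
    exact le_antisymm (Finset.sup_le hf) (Finset.le_sup hi)

section Shift

variable {L : Type*} [Field L] {P g : L[X]}

lemma polyGcd_dvd_left (a b : L[X]) : polyGcd a b ∣ a :=
  @EuclideanDomain.gcd_dvd_left L[X] _ (Classical.decEq _) a b

lemma polyGcd_dvd_right (a b : L[X]) : polyGcd a b ∣ b :=
  @EuclideanDomain.gcd_dvd_right L[X] _ (Classical.decEq _) a b

lemma dvd_polyGcd {a b c : L[X]} (ha : c ∣ a) (hb : c ∣ b) : c ∣ polyGcd a b :=
  @EuclideanDomain.dvd_gcd L[X] _ (Classical.decEq _) a b c ha hb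

lemma polyGcd_dvd_shift_modByMonic (h : ℕ) : polyGcd g P ∣ (X ^ h * g) %ₘ P :=
  (dvd_modByMonic_iff_of_dvd (polyGcd_dvd_right g P)).mpr
    ((polyGcd_dvd_left g P).mul_left _)

lemma shift_modByMonic_ne_zero (hP : P.Monic) (hX : IsCoprime X P) (hg : g ≠ 0)
    (hgP : g.natDegree < P.natDegree) (h : ℕ) : (X ^ h * g) %ₘ P ≠ 0 := by
  intro hr
  have hPg : P ∣ g :=
    hX.pow_left.symm.dvd_of_dvd_mul_left ((modByMonic_eq_zero_iff_dvd hP).mp hr)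
  exact (natDegree_le_of_dvd hPg hg).not_gt hgP

lemma shift_modByMonic_dvd_iff_associated (hX : IsCoprime X P) (h : ℕ) :
    (X ^ h * g) %ₘ P ∣ P ↔ Associated ((X ^ h * g) %ₘ P) (polyGcd g P) := by
  constructor
  · intro hrP
    have hrg : (X ^ h * g) %ₘ P ∣ g :=
      (hX.pow_left.of_isCoprime_of_dvd_right hrP).symm.dvd_of_dvd_mul_left
        ((dvd_modByMonic_iff_of_dvd hrP).mp dvd_rfl)
    exact associated_of_dvd_dvd (dvd_polyGcd hrg hrP) (polyGcd_dvd_shift_modByMonic h)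
  · intro hassoc
    exact hassoc.dvd.trans (polyGcd_dvd_right g P)

lemma natDegree_shift_modByMonic_eq_iff_dvd (hP : P.Monic) (hX : IsCoprime X P) (hg : g ≠ 0)
    (hgP : g.natDegree < P.natDegree) (h : ℕ) :
    ((X ^ h * g) %ₘ P).natDegree = (polyGcd g P).natDegree ↔ (X ^ h * g) %ₘ P ∣ P := by
  rw [shift_modByMonic_dvd_iff_associated hX,
    associated_iff_natDegree_eq_of_dvd (polyGcd_dvd_shift_modByMonic h)
      (shift_modByMonic_ne_zero hP hX hg hgP h)]

end Shift

theorem stmt3_general {L : Type*} [Field L] (n : ℕ) (g : L[X]) (hg0 : g ≠ 0)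
    (hgn : g.natDegree < n) :
    appDist n g = n - (polyGcd g (X ^ n - 1)).natDegree ↔
      ∃ h < n, ((X ^ h * g) %ₘ (X ^ n - 1)) ∣ (X ^ n - 1) := by
  have hn : 0 < n := by omega
  have hP : (X ^ n - 1 : L[X]).Monic := by simpa using monic_X_pow_sub_C (1 : L) hn.ne'
  have hPdeg : (X ^ n - 1 : L[X]).natDegree = n := by
    simpa using natDegree_X_pow_sub_C (n := n) (r := (1 : L))
  have hX := isCoprime_X_X_pow_sub_one (R := L) hn
  have hgP : g.natDegree < (X ^ n - 1 : L[X]).natDegree := by rwa [hPdeg]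
  have hm_le :
      ∀ h, (polyGcd g (X ^ n - 1)).natDegree ≤ ((X ^ h * g) %ₘ (X ^ n - 1)).natDegree :=
    fun h => natDegree_le_of_dvd (polyGcd_dvd_shift_modByMonic h)
      (shift_modByMonic_ne_zero hP hX hg0 hgP h)
  have hm_lt : (polyGcd g (X ^ n - 1)).natDegree < n :=
    (natDegree_le_of_dvd (polyGcd_dvd_left _ _) hg0).trans_lt hgn
  rw [appDist, if_neg hg0, Finset.sup_eq_iff_exists_eq_of_forall_le ⟨0, Finset.mem_range.mpr hn⟩
    fun h _ => Nat.sub_le_sub_left (hm_le h) n]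
  simp only [Finset.mem_range]
  refine exists_congr fun h => and_congr_right fun _ => ?_
  rw [← natDegree_shift_modByMonic_eq_iff_dvd hP hX hg0 hgP h]
  have := hm_le h
  omega

/-- d*(g) = n − deg(m_g) iff some cyclic shift x^h·g mod x^n−1 divides x^n−1. -/
theorem stmt3 {L : Type*} [Field L] (n : ℕ) (hn : 0 < n) (g : L[X]) (hg0 : g ≠ 0)
    (hgn : g.natDegree < n) :
    appDist n g = n - (polyGcd g (X ^ n - 1)).natDegree ↔
      ∃ h < n, ((X ^ h * g) %ₘ (X ^ n - 1)) ∣ (X ^ n - 1) :=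
  stmt3_general n g hg0 hgn
end

section
/- Let C be a cyclic code in F_q[x]/(x^n−1) with idempotent generator e. If there exist h ∈ {0,...,n−1} and a primitive n-th root of unity α such that (x^h·φ_{α,e} mod x^n−1) divides x^n−1, then the minimum distance of C equals its maximum BCH bound Δ(C), and α is an optimal root of C. -/
/-!
A codeword `c` of weight `w` has apparent distance at most `w` at every primitive root `β`:
if `x ^ h * φ_{β,c} mod (x ^ n - 1)` has degree `d`, its top `n - 1 - d` coefficients vanish,
and they are the values of `c` at `n - 1 - d` consecutive powers of `β`, so the BCH
(Vandermonde) bound gives `w ≥ n - d`. Hence `d*(C) ≤ d(C)`.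

Conversely let `g = x ^ h * φ_{α,e} mod (x ^ n - 1)`. As `g ∣ x ^ n - 1`, it has `deg g`
distinct roots among the `n`-th roots of unity, while `g (α⁻¹ ^ m) = α⁻¹ ^ (m h) · n · e_m`
is nonzero exactly for `m` in the support of `e`; so `wt e ≤ n - deg g`. Every codeword
satisfies `c = e c`, so it vanishes at the roots of unity where `e` does, and its shifted
transform has degree at most `deg g`. Therefore `d(C) ≤ wt e ≤ d*_α(C) ≤ d*(C) ≤ d(C)`.
-/

open Polynomial

open Finset

section Transform

variable {L : Type*} [Field L] {n : ℕ}

lemma monic_X_pow_sub_one (hn : 0 < n) : (X ^ n - 1 : L[X]).Monic := by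
  simpa using monic_X_pow_sub_C (1 : L) hn.ne'

lemma eval_modByMonic_X_pow_sub_one (f : L[X]) {ζ : L} (hζ : ζ ^ n = 1) :
    (f %ₘ (X ^ n - 1)).eval ζ = f.eval ζ := by
  rw [modByMonic_eq_sub_mul_div f (X ^ n - 1)]
  simp [hζ]

lemma X_pow_modByMonic_X_pow_sub_one (hn : 0 < n) (m : ℕ) :
    (X ^ m : L[X]) %ₘ (X ^ n - 1) = X ^ (m % n) := by
  have hdvd : (X ^ n - 1 : L[X]) ∣ X ^ m - X ^ (m % n) := by
    have hm : (X ^ m : L[X]) - X ^ (m % n) = X ^ (m % n) * ((X ^ n) ^ (m / n) - 1) := by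
      rw [mul_sub, mul_one, ← pow_mul, ← pow_add, Nat.mod_add_div]
    simpa [hm] using (sub_dvd_pow_sub_pow (X ^ n : L[X]) 1 (m / n)).mul_left (X ^ (m % n))
  rw [modByMonic_eq_of_dvd_sub (monic_X_pow_sub_one hn) hdvd,
    (modByMonic_eq_self_iff (monic_X_pow_sub_one hn)).mpr]
  have : (X ^ n - 1 : L[X]).degree = n := by simpa using degree_X_pow_sub_C hn (1 : L)
  rw [degree_X_pow, this]
  exact_mod_cast Nat.mod_lt _ hn

noncomputable def cyclicShift (n h : ℕ) (g : L[X]) : L[X] := (X ^ h * g) %ₘ (X ^ n - 1)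

lemma eval_cyclicShift (h : ℕ) (g : L[X]) {ζ : L} (hζ : ζ ^ n = 1) :
    (cyclicShift n h g).eval ζ = ζ ^ h * g.eval ζ := by
  rw [cyclicShift, eval_modByMonic_X_pow_sub_one _ hζ, eval_mul, eval_pow, eval_X]

lemma cyclicShift_sum_C_mul_X_pow (hn : 0 < n) (h : ℕ) (v : ℕ → L) :
    cyclicShift n h (∑ j ∈ range n, C (v j) * X ^ j) =
      ∑ j ∈ range n, C (v j) * X ^ ((j + h) % n) := by
  rw [cyclicShift, Finset.mul_sum, ← modByMonicHom_apply, map_sum]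
  refine sum_congr rfl fun j _ => ?_
  rw [modByMonicHom_apply, mul_left_comm, ← pow_add, ← smul_eq_C_mul, smul_modByMonic,
    add_comm h, X_pow_modByMonic_X_pow_sub_one hn, smul_eq_C_mul]

lemma coeff_dftP (α : L) (f : L[X]) (i : ℕ) :
    (dftP n α f).coeff i = if i < n then f.eval (α ^ i) else 0 := by
  simp [dftP, finsetSum_coeff]

lemma cyclicShift_dftP (hn : 0 < n) {α : L} (hα : IsPrimitiveRoot α n) {h : ℕ} (hh : h ≤ n)
    (f : L[X]) : cyclicShift n h (dftP n α f) = dftP n α (f.comp (C (α ^ (n - h)) * X)) := by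
  have hmod : ∀ k, α ^ (k % n) = α ^ k := fun k => by rw [hα.eq_orderOf, pow_mod_orderOf]
  have hinv : ∀ j < n, ((j + h) % n + (n - h)) % n = j := fun j hj => by
    rw [Nat.mod_add_mod, show j + h + (n - h) = j + n by omega, Nat.add_mod_right,
      Nat.mod_eq_of_lt hj]
  rw [dftP, cyclicShift_sum_C_mul_X_pow hn, dftP]
  refine sum_nbij' (fun j => (j + h) % n) (fun k => (k + (n - h)) % n) ?_ ?_ ?_ ?_ ?_
  · simp [Nat.mod_lt _ hn]
  · simp [Nat.mod_lt _ hn]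
  · intro j hj
    exact hinv j (mem_range.mp hj)
  · intro k hk
    rw [Nat.mod_add_mod, show k + (n - h) + h = k + n by omega, Nat.add_mod_right,
      Nat.mod_eq_of_lt (mem_range.mp hk)]
  · intro j _
    rw [eval_comp, eval_mul, eval_C, eval_X, hmod, ← pow_add,
      show n - h + (j + h) = j + n by omega, pow_add, hα.pow_eq_one, mul_one]

lemma coeff_cyclicShift_dftP (hn : 0 < n) {α : L} (hα : IsPrimitiveRoot α n) {h : ℕ}
    (hh : h ≤ n) (f : L[X]) (i : ℕ) : (cyclicShift n h (dftP n α f)).coeff i =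
      if i < n then f.eval (α ^ (n - h) * α ^ i) else 0 := by
  simp [cyclicShift_dftP hn hα hh, coeff_dftP, eval_comp]

lemma eval_dftP_inv_pow {α : L} (hα : IsPrimitiveRoot α n) {f : L[X]} (hf : f.natDegree < n)
    {m : ℕ} (hm : m < n) : (dftP n α f).eval (α⁻¹ ^ m) = n * f.coeff m := by
  have hα0 : α ≠ 0 := hα.ne_zero (by omega)
  have horth : ∀ k < n, ∑ j ∈ range n, (α ^ k * α⁻¹ ^ m) ^ j = if k = m then (n : L) else 0 := by
    intro k hk
    split_ifs with hkm
    · subst hkm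
      simp [hα0]
    · have hx1 : α ^ k * α⁻¹ ^ m ≠ 1 := fun h1 => hkm (hα.pow_inj hk hm (by
        rwa [inv_pow, mul_inv_eq_one₀ (pow_ne_zero _ hα0)] at h1))
      have hxn : (α ^ k * α⁻¹ ^ m) ^ n = 1 := by
        rw [mul_pow, ← pow_mul, ← pow_mul, mul_comm k, mul_comm m, pow_mul, pow_mul,
          hα.pow_eq_one, hα.inv.pow_eq_one, one_pow, one_pow, one_mul]
      rw [geom_sum_eq hx1, hxn, sub_self, zero_div]
  calc (dftP n α f).eval (α⁻¹ ^ m)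
      = ∑ j ∈ range n, ∑ k ∈ range n, f.coeff k * (α ^ k * α⁻¹ ^ m) ^ j := by
        simp only [dftP, eval_finsetSum, eval_mul, eval_C, eval_pow, eval_X,
          eval_eq_sum_range' hf, sum_mul]
        refine sum_congr rfl fun j _ => sum_congr rfl fun k _ => ?_
        ring
    _ = ∑ k ∈ range n, f.coeff k * ∑ j ∈ range n, (α ^ k * α⁻¹ ^ m) ^ j := by
        rw [sum_comm]
        simp only [mul_sum]
    _ = n * f.coeff m := by
        rw [sum_congr rfl fun k hk => by rw [horth k (mem_range.mp hk)]]
        simp [hm, mul_comm]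

lemma natCast_ne_zero_of_isPrimitiveRoot (hn : 0 < n) {α : L} (hα : IsPrimitiveRoot α n) :
    (n : L) ≠ 0 :=
  have : NeZero n := .of_pos hn
  hα.neZero'.out

lemma dftP_ne_zero (hn : 0 < n) {α : L} (hα : IsPrimitiveRoot α n) {f : L[X]} (hf : f ≠ 0)
    (hdeg : f.natDegree < n) : dftP n α f ≠ 0 := by
  intro h0
  refine hf (ext fun m => ?_)
  rw [coeff_zero]
  by_cases hm : m < n
  · have := eval_dftP_inv_pow hα hdeg hm
    rw [h0, eval_zero, eq_comm, mul_eq_zero] at this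
    exact this.resolve_left (natCast_ne_zero_of_isPrimitiveRoot hn hα)
  · exact coeff_eq_zero_of_natDegree_lt (by omega)

/-- The BCH bound, for zeros `y * x ^ k` in geometric progression. -/
lemma lt_card_support_of_eval_mul_pow_eq_zero {R : Type*} [CommRing R] [IsDomain R] {c : R[X]}
    (hc : c ≠ 0) {x y : R} (hy : y ≠ 0) (hx : Set.InjOn (x ^ ·) c.support) {δ : ℕ}
    (hz : ∀ k < δ, c.eval (y * x ^ k) = 0) : δ < #c.support := by
  by_contra! hδ
  set σ := c.support.equivFin.symm
  have hv := Matrix.eq_zero_of_forall_pow_sum_mul_pow_eq_zero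
    (f := fun i => x ^ (σ i : ℕ)) (v := fun i => c.coeff (σ i) * y ^ (σ i : ℕ))
    (fun i j hij => σ.injective (Subtype.ext (hx (σ i).2 (σ j).2 hij))) fun k => by
      rw [← hz k (k.2.trans_le hδ), eval_eq_sum, sum_def, ← sum_coe_sort c.support]
      exact Fintype.sum_equiv σ _ _ fun i => by ring
  obtain ⟨m, hm⟩ := nonempty_support_iff.mpr hc
  have := congrFun hv (σ.symm ⟨m, hm⟩)
  simp only [Equiv.apply_symm_apply, Pi.zero_apply, mul_eq_zero] at this
  exact this.elim (mem_support_iff.mp hm) (pow_ne_zero _ hy)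

lemma sub_natDegree_cyclicShift_dftP_le_card_support (hn : 0 < n) {β : L}
    (hβ : IsPrimitiveRoot β n) {c : L[X]} (hc : c ≠ 0) (hdeg : c.natDegree < n) {h : ℕ}
    (hh : h ≤ n) : n - (cyclicShift n h (dftP n β c)).natDegree ≤ #c.support := by
  set d := (cyclicShift n h (dftP n β c)).natDegree
  have hz : ∀ k < n - 1 - d, c.eval (β ^ (n - h) * β ^ (d + 1) * β ^ k) = 0 := fun k hk => by
    have := coeff_eq_zero_of_natDegree_lt (show d < d + 1 + k by omega)
    rwa [coeff_cyclicShift_dftP hn hβ hh, if_pos (by omega), pow_add β (d + 1),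
      ← mul_assoc] at this
  have hinj : Set.InjOn (β ^ ·) c.support := fun i hi j hj hij =>
    hβ.pow_inj ((le_natDegree_of_mem_supp _ hi).trans_lt hdeg)
      ((le_natDegree_of_mem_supp _ hj).trans_lt hdeg) hij
  have hβ0 : β ≠ 0 := hβ.ne_zero hn.ne'
  have := lt_card_support_of_eval_mul_pow_eq_zero hc (by positivity) hinj hz
  omega

lemma appDist_le {g : L[X]} {b : ℕ} (hb : ∀ h < n, n - (cyclicShift n h g).natDegree ≤ b) :
    appDist n g ≤ b := by
  unfold appDist
  split_ifs
  · exact Nat.zero_le b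
  · exact Finset.sup_le fun h hh => hb h (mem_range.mp hh)

lemma le_appDist {g : L[X]} (hg : g ≠ 0) {h : ℕ} (hh : h < n) :
    n - (cyclicShift n h g).natDegree ≤ appDist n g := by
  unfold appDist
  rw [if_neg hg]
  exact le_sup (f := fun h => n - (cyclicShift n h g).natDegree) (mem_range.mpr hh)

lemma appDist_dftP_le_card_support (hn : 0 < n) {β : L} (hβ : IsPrimitiveRoot β n) {c : L[X]}
    (hc : c ≠ 0) (hdeg : c.natDegree < n) : appDist n (dftP n β c) ≤ #c.support :=
  appDist_le fun _ hh => sub_natDegree_cyclicShift_dftP_le_card_support hn hβ hc hdeg hh.le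

lemma natDegree_le_card_filter_isRoot [DecidableEq L] (hn : 0 < n) {α : L}
    (hα : IsPrimitiveRoot α n) {g : L[X]} (hg : g ∣ X ^ n - 1) :
    g.natDegree ≤ #{ζ ∈ nthRootsFinset n (1 : L) | g.IsRoot ζ} := by
  have hX : (X ^ n - 1 : L[X]) = X ^ n - C 1 := by rw [map_one]
  have hX0 : (X ^ n - 1 : L[X]) ≠ 0 := (monic_X_pow_sub_one hn).ne_zero
  have hsplit : Splits g := (hX ▸ X_pow_sub_one_splits hα).of_dvd hX0 hg
  have hle : g.roots ≤ nthRoots n (1 : L) := by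
    rw [nthRoots, ← hX]
    exact roots.le_of_dvd hX0 hg
  calc g.natDegree = Multiset.card g.roots := (splits_iff_card_roots.mp hsplit).symm
    _ = #g.roots.toFinset :=
        (Multiset.toFinset_card_of_nodup (Multiset.nodup_of_le hle hα.nthRoots_one_nodup)).symm
    _ ≤ _ := card_le_card fun ζ hζ => by
        rw [Multiset.mem_toFinset] at hζ
        rw [mem_filter, mem_nthRootsFinset hn]
        exact ⟨(mem_nthRoots hn).mp (Multiset.mem_of_le hle hζ), isRoot_of_mem_roots hζ⟩

lemma card_support_add_natDegree_cyclicShift_le (hn : 0 < n) {α : L} (hα : IsPrimitiveRoot α n)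
    {f : L[X]} (hf : f.natDegree < n) {h : ℕ}
    (hdvd : cyclicShift n h (dftP n α f) ∣ X ^ n - 1) :
    #f.support + (cyclicShift n h (dftP n α f)).natDegree ≤ n := by
  classical
  set g := cyclicShift n h (dftP n α f)
  have hroots := natDegree_le_card_filter_isRoot hn hα hdvd
  have hnonroots : #f.support ≤ #{ζ ∈ nthRootsFinset n (1 : L) | ¬ g.IsRoot ζ} := by
    refine card_le_card_of_injOn (fun m => α⁻¹ ^ m) (fun m hm => ?_) fun m hm m' hm' hmm' => ?_
    · have hmn : m < n := (le_natDegree_of_mem_supp _ hm).trans_lt hf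
      have hζ : (α⁻¹ ^ m) ^ n = 1 := by
        rw [← pow_mul, mul_comm, pow_mul, hα.inv.pow_eq_one, one_pow]
      rw [mem_coe, mem_filter, mem_nthRootsFinset hn, IsRoot.def,
        eval_cyclicShift _ _ hζ, eval_dftP_inv_pow hα hf hmn]
      exact ⟨hζ, mul_ne_zero (pow_ne_zero _ (pow_ne_zero _ (inv_ne_zero (hα.ne_zero hn.ne'))))
        (mul_ne_zero (natCast_ne_zero_of_isPrimitiveRoot hn hα) (mem_support_iff.mp hm))⟩
    · exact hα.inv.pow_inj ((le_natDegree_of_mem_supp _ hm).trans_lt hf)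
        ((le_natDegree_of_mem_supp _ hm').trans_lt hf) hmm'
  have := card_filter_add_card_filter_not (s := nthRootsFinset n (1 : L)) (fun ζ => g.IsRoot ζ)
  rw [hα.card_nthRootsFinset] at this
  omega

lemma natDegree_cyclicShift_dftP_le (hn : 0 < n) {α : L} (hα : IsPrimitiveRoot α n) {h : ℕ}
    (hh : h ≤ n) {f g : L[X]} (hfg : ∀ ζ : L, ζ ^ n = 1 → g.eval ζ = 0 → f.eval ζ = 0) :
    (cyclicShift n h (dftP n α f)).natDegree ≤ (cyclicShift n h (dftP n α g)).natDegree := by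
  rw [natDegree_le_iff_coeff_eq_zero]
  intro i hi
  have hgi := coeff_eq_zero_of_natDegree_lt hi
  rw [coeff_cyclicShift_dftP hn hα hh] at hgi ⊢
  split_ifs at hgi ⊢
  · refine hfg _ ?_ hgi
    rw [← pow_add, ← pow_mul, mul_comm, pow_mul, hα.pow_eq_one, one_pow]
  · rfl

end Transform

namespace IsIdemGen

variable {L : Type*} [Field L] {q n : ℕ} {Cc : CyclicCode L q n} {e c : L[X]}

lemma ne_zero (hgen : IsIdemGen e Cc) (hc : c ∈ Cc.carrier) (hc0 : c ≠ 0) : e ≠ 0 := by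
  rintro rfl
  exact hc0 (by rw [← hgen.2.2 c hc, zero_mul, zero_modByMonic])

lemma eval_eq_zero (hgen : IsIdemGen e Cc) (hc : c ∈ Cc.carrier) {ζ : L} (hζ : ζ ^ n = 1)
    (he : e.eval ζ = 0) : c.eval ζ = 0 := by
  rw [← hgen.2.2 c hc, eval_modByMonic_X_pow_sub_one _ hζ, eval_mul, he, zero_mul]

end IsIdemGen

namespace CyclicCode

variable {L : Type*} [Field L] {q n : ℕ}

lemma length_pos (Cc : CyclicCode L q n) : 0 < n := by simpa using Cc.deg_lt 0 Cc.zero_mem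

variable (Cc : CyclicCode L q n)

/-- Since `sInf ∅ = 0`, this is `0` for the zero code. -/
noncomputable def infNonzero (F : L[X] → ℕ) : ℕ := sInf {d | ∃ c ∈ Cc.carrier, c ≠ 0 ∧ d = F c}

lemma infNonzero_le_infNonzero {F G : L[X] → ℕ}
    (h : ∀ c ∈ Cc.carrier, c ≠ 0 → ∃ c' ∈ Cc.carrier, c' ≠ 0 ∧ F c' ≤ G c) :
    Cc.infNonzero F ≤ Cc.infNonzero G := by
  unfold infNonzero
  by_cases hC : ∃ c ∈ Cc.carrier, c ≠ 0
  · obtain ⟨c, hc, hc0⟩ := hC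
    have hG : {d | ∃ c ∈ Cc.carrier, c ≠ 0 ∧ d = G c}.Nonempty := ⟨G c, c, hc, hc0, rfl⟩
    obtain ⟨c, hc, hc0, hd⟩ := Nat.sInf_mem hG
    obtain ⟨c', hc', hc0', hle⟩ := h c hc hc0
    have hF : F c' ∈ {d | ∃ c ∈ Cc.carrier, c ≠ 0 ∧ d = F c} := ⟨c', hc', hc0', rfl⟩
    exact (Nat.sInf_le hF).trans (hd ▸ hle)
  · have hF : {d | ∃ c ∈ Cc.carrier, c ≠ 0 ∧ d = F c} = ∅ :=
      Set.eq_empty_of_forall_notMem fun _ ⟨c, hc, hc0, _⟩ => hC ⟨c, hc, hc0⟩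
    rw [hF, Nat.sInf_empty]
    exact Nat.zero_le _

lemma appDistAt_le_minDist {β : L} (hβ : IsPrimitiveRoot β n) : appDistAt β Cc ≤ minDist Cc :=
  Cc.infNonzero_le_infNonzero (F := fun c => appDist n (dftP n β c)) (G := fun c => #c.support)
    fun c hc hc0 =>
      ⟨c, hc, hc0, appDist_dftP_le_card_support Cc.length_pos hβ hc0 (Cc.deg_lt c hc)⟩

end CyclicCode


namespace CyclicCode

variable {L : Type*} [Field L] {q n : ℕ} (Cc : CyclicCode L q n)

lemma minDist_le_appDistAt_of_cyclicShift_dvd {e : L[X]} (hgen : IsIdemGen e Cc) {h : ℕ}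
    (hh : h < n) {α : L} (hα : IsPrimitiveRoot α n)
    (hdvd : cyclicShift n h (dftP n α e) ∣ X ^ n - 1) : minDist Cc ≤ appDistAt α Cc :=
  Cc.infNonzero_le_infNonzero (F := fun c => #c.support) (G := fun c => appDist n (dftP n α c))
    fun c hc hc0 => ⟨e, hgen.1, hgen.ne_zero hc hc0, by
      have hn := Cc.length_pos
      have hwt := card_support_add_natDegree_cyclicShift_le hn hα (Cc.deg_lt e hgen.1) hdvd
      have hdeg := natDegree_cyclicShift_dftP_le hn hα hh.le fun ζ hζ => hgen.eval_eq_zero hc hζ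
      have := le_appDist (dftP_ne_zero hn hα hc0 (Cc.deg_lt c hc)) hh
      omega⟩

lemma appDistCode_eq_appDistAt {α : L} (hα : IsPrimitiveRoot α n)
    (hmax : ∀ β : L, IsPrimitiveRoot β n → appDistAt β Cc ≤ appDistAt α Cc) :
    appDistCode Cc = appDistAt α Cc :=
  IsGreatest.csSup_eq ⟨⟨α, hα, rfl⟩, by rintro _ ⟨β, hβ, rfl⟩; exact hmax β hβ⟩

end CyclicCode

theorem stmt12_general {L : Type*} [Field L] (q n : ℕ)
    (Cc : CyclicCode L q n) (e : L[X]) (hgen : IsIdemGen e Cc)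
    (h : ℕ) (hh : h < n) (α : L) (hα : IsPrimitiveRoot α n)
    (hdvd : ((X ^ h * dftP n α e) %ₘ (X ^ n - 1)) ∣ (X ^ n - 1)) :
    minDist Cc = appDistCode Cc ∧ IsOptimalRoot α Cc := by
  have hmin : appDistAt α Cc = minDist Cc :=
    le_antisymm (Cc.appDistAt_le_minDist hα)
      (Cc.minDist_le_appDistAt_of_cyclicShift_dvd hgen hh hα hdvd)
  have hcode : appDistCode Cc = minDist Cc :=
    (Cc.appDistCode_eq_appDistAt hα fun β hβ => hmin ▸ Cc.appDistAt_le_minDist hβ).trans hmin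
  exact ⟨hcode.symm, hα, hmin.trans hcode.symm⟩

/-- if some cyclic shift of φ_{α,e} divides x^n−1 (e the idempotent
generator), then d(C) = Δ(C) (= d*(C) by Camion) and α is an optimal root of C. -/
theorem stmt12 {L : Type*} [Field L] (p q s n : ℕ) (hp : p.Prime) [CharP L p]
    (hq : q = p ^ s) (hs : 0 < s) (hn : 0 < n) (hcop : Nat.Coprime n q)
    (Cc : CyclicCode L q n) (e : L[X]) (hgen : IsIdemGen e Cc)
    (h : ℕ) (hh : h < n) (α : L) (hα : IsPrimitiveRoot α n)
    (hdvd : ((X ^ h * dftP n α e) %ₘ (X ^ n - 1)) ∣ (X ^ n - 1)) :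
    minDist Cc = appDistCode Cc ∧ IsOptimalRoot α Cc :=
  stmt12_general q n Cc e hgen h hh α hα hdvd
end
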